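/- arXiv:1112.1504 — 2 statements merged into one kernel-verified Lean document; each statement's English description precedes it below -/
import Mathlib

section
/- Let γ : I → ℝ³ be a smooth unit speed time-like curve (⟨γ'(s),γ'(s)⟩ = −1) with γ''(s) ≠ 0 for all s. Define the Frenet frame T(s) = γ'(s), N(s) = γ''(s)/‖γ''(s)‖, B(s) = T(s) × N(s), the curvature κ(s) = ‖γ''(s)‖ and the torsion τ(s) = ⟨N'(s), B(s)⟩. Suppose γ is a Bertrand curve, i.e. there exist real constants A, C, both non-zero, with A·κ(s) + C·τ(s) = 1 for all s, and assume A > 0 and |C| < A. Set ξ₂ = artanh(C/A) and let ε ∈ {1, −1}. Then the curve g(s) = ε·(cosh(ξ₂)·T(s) − sinh(ξ₂)·B(s)) satisfies: ⟨g(s), g(s)⟩ = −1 (so g lies on H²), g'(s) = (ε·cosh(ξ₂)/A)·N(s) (so ⟨g'(s), g'(s)⟩ = cosh²(ξ₂)/A² > 0, and g is space-like), and γ'(s) = ε·cosh(ξ₂)·g(s) + A·tanh(ξ₂)·(g(s) × g'(s)) for all s ∈ I. -/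
noncomputable section

open Real

/-- The Lorentzian (Minkowski) inner product on ℝ³: ⟨x,y⟩ = x₁y₁ + x₂y₂ − x₃y₃. -/
def mink (x y : Fin 3 → ℝ) : ℝ := x 0 * y 0 + x 1 * y 1 - x 2 * y 2

/-- The Lorentzian cross product on ℝ³:
x × y = (x₂y₃ − x₃y₂, x₃y₁ − x₁y₃, x₂y₁ − x₁y₂). -/
def mcross (x y : Fin 3 → ℝ) : Fin 3 → ℝ :=
  ![x 1 * y 2 - x 2 * y 1, x 2 * y 0 - x 0 * y 2, x 1 * y 0 - x 0 * y 1]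

/-- Determinant of three vectors in ℝ³ (as the rows of a 3×3 matrix). -/
def mdet (x y z : Fin 3 → ℝ) : ℝ := Matrix.det (Matrix.of ![x, y, z])

/-- The pseudo norm ‖x‖ = √|⟨x,x⟩|. -/
def mnorm (x : Fin 3 → ℝ) : ℝ := Real.sqrt |mink x x|

section helpers

private lemma mink_symm (x y : Fin 3 → ℝ) : mink x y = mink y x := by
  simp [mink]; ring

private lemma L5 (x y v : Fin 3 → ℝ) (j : Fin 3) :
    (mink x x * mink y y - mink x y ^ 2) * v j =
      (mink y y * mink v x - mink x y * mink v y) * x j +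
      (mink x x * mink v y - mink x y * mink v x) * y j -
      mink v (mcross x y) * mcross x y j := by
  fin_cases j <;> simp [mink, mcross] <;> ring

private lemma key_lemma {u w x3 : Fin 3 → ℝ} (h1 : mink u u = -1)
    (h2 : mink u w = 0) (j : Fin 3) :
    mink w w * mcross u x3 j =
      -(mink x3 (mcross u w)) * w j + mink w x3 * mcross u w j := by
  have h5 := L5 u w (mcross u x3) j
  have e1 : mink (mcross u x3) u = 0 := by simp [mink, mcross]; ring
  have e2 : mink (mcross u x3) w = -(mink x3 (mcross u w)) := by
    simp [mink, mcross]; ring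
  have e3 : mink (mcross u x3) (mcross u w) =
      mink u x3 * mink u w - mink u u * mink w x3 := by
    simp [mink, mcross]; ring
  rw [e1, e2, e3, h1, h2] at h5
  linarith [h5]

variable {f g : ℝ → Fin 3 → ℝ} {f' g' : Fin 3 → ℝ} {t : ℝ}

private lemma hasDerivAt_mink
    (hf : ∀ i, HasDerivAt (fun u => f u i) (f' i) t)
    (hg : ∀ i, HasDerivAt (fun u => g u i) (g' i) t) :
    HasDerivAt (fun u => mink (f u) (g u)) (mink f' (g t) + mink (f t) g') t := by
  have h := (((hf 0).mul (hg 0)).add ((hf 1).mul (hg 1))).sub ((hf 2).mul (hg 2))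
  have e : mink f' (g t) + mink (f t) g' =
      f' 0 * g t 0 + f t 0 * g' 0 + (f' 1 * g t 1 + f t 1 * g' 1) -
        (f' 2 * g t 2 + f t 2 * g' 2) := by
    simp [mink]; ring
  rw [e]; exact h

private lemma hasDerivAt_mcross
    (hf : ∀ i, HasDerivAt (fun u => f u i) (f' i) t)
    (hg : ∀ i, HasDerivAt (fun u => g u i) (g' i) t) (i : Fin 3) :
    HasDerivAt (fun u => mcross (f u) (g u) i)
      (mcross f' (g t) i + mcross (f t) g' i) t := by
  fin_cases i
  · refine HasDerivAt.congr_deriv (((hf 1).mul (hg 2)).sub ((hf 2).mul (hg 1))) ?_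
    simp [mcross]; ring
  · refine HasDerivAt.congr_deriv (((hf 2).mul (hg 0)).sub ((hf 0).mul (hg 2))) ?_
    simp [mcross]; ring
  · refine HasDerivAt.congr_deriv (((hf 1).mul (hg 0)).sub ((hf 0).mul (hg 1))) ?_
    simp [mcross]; ring

private lemma spacelike_aux {u w : Fin 3 → ℝ} (h1 : mink u u = -1)
    (h2 : mink u w = 0) (h3 : w ≠ 0) : 0 < mink w w := by
  simp only [mink] at h1 h2 ⊢
  have hu2 : 1 ≤ u 2 ^ 2 := by nlinarith [sq_nonneg (u 0), sq_nonneg (u 1)]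
  have key : u 2 ^ 2 * (w 0 ^ 2 + w 1 ^ 2 - w 2 ^ 2) =
      w 0 ^ 2 + w 1 ^ 2 + (u 0 * w 1 - u 1 * w 0) ^ 2 := by
    linear_combination (-(w 0 ^ 2) - w 1 ^ 2) * h1 +
      (u 0 * w 0 + u 1 * w 1 + u 2 * w 2) * h2
  have hpos : 0 < w 0 ^ 2 + w 1 ^ 2 := by
    rcases eq_or_ne (w 0) 0 with h0 | h0
    · rcases eq_or_ne (w 1) 0 with hw1 | hw1
      · exfalso
        have hu2ne : u 2 ≠ 0 := by intro h; rw [h] at hu2; norm_num at hu2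
        have hw2 : w 2 = 0 := by
          have : u 2 * w 2 = 0 := by rw [h0, hw1] at h2; linarith
          exact (mul_eq_zero.mp this).resolve_left hu2ne
        exact h3 (funext fun i => by fin_cases i <;> simp [h0, hw1, hw2])
      · positivity
    · positivity
  nlinarith [sq_nonneg (u 0 * w 1 - u 1 * w 0), key, hu2, hpos]

end helpers

/-- every time-like Bertrand curve γ (A > 0, |C| < A) arises from the
unit speed space-like curve g(s) = ε·(cosh ξ₂·T(s) − sinh ξ₂·B(s)) on H², where
ξ₂ = artanh(C/A) (encoded by tanh ξ₂ = C/A): g lies on H²,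
g' = (ε·cosh ξ₂/A)·N is space-like with ⟨g', g'⟩ = cosh² ξ₂/A², and
γ' = ε·cosh ξ₂·g + A·tanh ξ₂·(g × g'). -/
theorem timelike_bertrand_from_hyperbolic_curve
    (a b : ℝ) (I : Set ℝ) (hI : I = Set.Ioo a b)
    (γ : ℝ → Fin 3 → ℝ) (hγ : ContDiff ℝ (⊤ : ℕ∞) γ)
    (hunit : ∀ s ∈ I, mink (deriv γ s) (deriv γ s) = -1)
    (hacc : ∀ s ∈ I, deriv (deriv γ) s ≠ 0)
    (T N B : ℝ → Fin 3 → ℝ)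
    (hT : ∀ s, T s = deriv γ s)
    (hN : ∀ s, N s = (mnorm (deriv (deriv γ) s))⁻¹ • deriv (deriv γ) s)
    (hB : ∀ s, B s = mcross (T s) (N s))
    (κ τ : ℝ → ℝ)
    (hκ : ∀ s, κ s = mnorm (deriv (deriv γ) s))
    (hτ : ∀ s, τ s = mink (deriv N s) (B s))
    (A C : ℝ) (hA0 : A ≠ 0) (hC0 : C ≠ 0)
    (hbertrand : ∀ s ∈ I, A * κ s + C * τ s = 1)
    (hApos : 0 < A) (hCA : |C| < A)
    (ξ : ℝ) (hξ : Real.tanh ξ = C / A)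
    (ε : ℝ) (hε : ε = 1 ∨ ε = -1)
    (g : ℝ → Fin 3 → ℝ)
    (hg : ∀ s, g s = ε • (Real.cosh ξ • T s - Real.sinh ξ • B s)) :
    ∀ s ∈ I,
      mink (g s) (g s) = -1 ∧
      deriv g s = (ε * Real.cosh ξ / A) • N s ∧
      mink (deriv g s) (deriv g s) = Real.cosh ξ ^ 2 / A ^ 2 ∧
      deriv γ s = (ε * Real.cosh ξ) • g s +
        (A * Real.tanh ξ) • mcross (g s) (deriv g s) := by
  subst hI
  have h1le : (1 : WithTop ℕ∞) ≤ ((⊤ : ℕ∞) : WithTop ℕ∞) := by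
    exact_mod_cast (le_top : (1 : ℕ∞) ≤ ⊤)
  have hγ' : ContDiff ℝ ((⊤ : ℕ∞) : WithTop ℕ∞) γ := hγ.of_le (by simp)
  have hsm1 : ContDiff ℝ ((⊤ : ℕ∞) : WithTop ℕ∞) (deriv γ) :=
    (contDiff_infty_iff_deriv.mp hγ').2
  have hsm2 : ContDiff ℝ ((⊤ : ℕ∞) : WithTop ℕ∞) (deriv (deriv γ)) :=
    (contDiff_infty_iff_deriv.mp hsm1).2
  set d1 := deriv γ with hd1def
  set d2 := deriv d1 with hd2def
  set d3 := deriv d2 with hd3def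
  have hD1 : ∀ t : ℝ, ∀ i, HasDerivAt (fun u => γ u i) (d1 t i) t := fun t i =>
    hasDerivAt_pi.mp (hγ'.differentiable (by simp) t).hasDerivAt i
  have hD2 : ∀ t : ℝ, ∀ i, HasDerivAt (fun u => d1 u i) (d2 t i) t := fun t i =>
    hasDerivAt_pi.mp (hsm1.differentiable (by simp) t).hasDerivAt i
  have hD3 : ∀ t : ℝ, ∀ i, HasDerivAt (fun u => d2 u i) (d3 t i) t := fun t i =>
    hasDerivAt_pi.mp (hsm2.differentiable (by simp) t).hasDerivAt i
  have horth : ∀ t ∈ Set.Ioo a b, mink (d1 t) (d2 t) = 0 := by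
    intro t ht
    have hp : HasDerivAt (fun u => mink (d1 u) (d1 u))
        (mink (d2 t) (d1 t) + mink (d1 t) (d2 t)) t :=
      hasDerivAt_mink (hD2 t) (hD2 t)
    have hev : (fun u => mink (d1 u) (d1 u)) =ᶠ[nhds t] fun _ => (-1 : ℝ) := by
      filter_upwards [Ioo_mem_nhds ht.1 ht.2] with v hv
      exact hunit v hv
    have h0 : HasDerivAt (fun u => mink (d1 u) (d1 u)) 0 t :=
      (hasDerivAt_const t (-1 : ℝ)).congr_of_eventuallyEq hev
    have huniq := hp.unique h0
    have hsymm : mink (d2 t) (d1 t) = mink (d1 t) (d2 t) := mink_symm _ _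
    rw [hsymm] at huniq
    linarith
  have hqpos : ∀ t ∈ Set.Ioo a b, 0 < mink (d2 t) (d2 t) := fun t ht =>
    spacelike_aux (hunit t ht) (horth t ht) (hacc t ht)
  have hmn : ∀ t ∈ Set.Ioo a b, mnorm (d2 t) = Real.sqrt (mink (d2 t) (d2 t)) := by
    intro t ht; rw [mnorm, abs_of_pos (hqpos t ht)]
  intro s hs
  obtain ⟨hsa, hsb⟩ := hs
  have hsI : s ∈ Set.Ioo a b := ⟨hsa, hsb⟩
  set u := d1 s with hudef
  set w := d2 s with hwdef
  set x3 := d3 s with hx3def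
  have h1 : mink u u = -1 := hunit s hsI
  have h2 : mink u w = 0 := horth s hsI
  have hq : 0 < mink w w := hqpos s hsI
  set k := Real.sqrt (mink w w) with hkdef
  have hk : 0 < k := Real.sqrt_pos.mpr hq
  have hkne : k ≠ 0 := hk.ne'
  have hk2 : k ^ 2 = mink w w := Real.sq_sqrt hq.le
  set m := mink w x3 with hmdef
  -- derivative of t ↦ ⟨d2 t, d2 t⟩
  have hQ : HasDerivAt (fun t => mink (d2 t) (d2 t)) (2 * m) s := by
    convert hasDerivAt_mink (hD3 s) (hD3 s) using 1
    rw [hmdef, mink_symm x3 w]; ring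
  -- derivative of t ↦ √⟨d2 t, d2 t⟩
  have hK : HasDerivAt (fun t => Real.sqrt (mink (d2 t) (d2 t))) (m / k) s := by
    convert hQ.sqrt hq.ne' using 1
    rw [← hkdef]
    field_simp
  have hKinv : HasDerivAt (fun t => (Real.sqrt (mink (d2 t) (d2 t)))⁻¹)
      (-(m / k) / k ^ 2) s := hK.inv hkne
  -- derivative of components of t ↦ d1 t × d2 t
  have hXd : ∀ i, HasDerivAt (fun t => mcross (d1 t) (d2 t) i)
      (mcross w w i + mcross u x3 i) s := fun i =>
    hasDerivAt_mcross (hD2 s) (hD3 s) i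
  -- N at s and derivative of N
  have hNs : N s = k⁻¹ • w := by rw [hN, hmn s hsI]
  have hNW : HasDerivAt N (fun i => -(m / k) / k ^ 2 * w i + k⁻¹ * x3 i) s := by
    apply hasDerivAt_pi.mpr
    intro i
    have hev : (fun t => N t i) =ᶠ[nhds s]
        (fun t => (Real.sqrt (mink (d2 t) (d2 t)))⁻¹ * d2 t i) := by
      filter_upwards [Ioo_mem_nhds hsa hsb] with t ht
      rw [hN t, hmn t ht]; simp
    refine HasDerivAt.congr_of_eventuallyEq ?_ hev
    exact hKinv.mul (hD3 s i)
  -- the value of τ at s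
  have hBs : ∀ i, B s i = k⁻¹ * mcross u w i := by
    intro i
    rw [hB, hT, hN, hmn s hsI]
    fin_cases i <;> simp [mcross] <;> ring
  have hz : k * k⁻¹ = 1 := mul_inv_cancel₀ hkne
  have hA1 : A * A⁻¹ = 1 := mul_inv_cancel₀ hA0
  have h1c : u 0 * u 0 + u 1 * u 1 - u 2 * u 2 = -1 := h1
  have h2c : u 0 * w 0 + u 1 * w 1 - u 2 * w 2 = 0 := h2
  have hk2c : k ^ 2 = w 0 * w 0 + w 1 * w 1 - w 2 * w 2 := hk2
  have hwXc : w 0 * mcross u w 0 + w 1 * mcross u w 1 - w 2 * mcross u w 2 = 0 := by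
    simp [mcross]; ring
  have huXc : u 0 * mcross u w 0 + u 1 * mcross u w 1 - u 2 * mcross u w 2 = 0 := by
    simp [mcross]; ring
  have hXXc : mcross u w 0 * mcross u w 0 + mcross u w 1 * mcross u w 1 -
      mcross u w 2 * mcross u w 2 =
      (u 0 * w 0 + u 1 * w 1 - u 2 * w 2) ^ 2 -
        (u 0 * u 0 + u 1 * u 1 - u 2 * u 2) * (w 0 * w 0 + w 1 * w 1 - w 2 * w 2) := by
    simp [mcross]; ring
  have keyc : ∀ i, (w 0 * w 0 + w 1 * w 1 - w 2 * w 2) * mcross u x3 i =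
      -(x3 0 * mcross u w 0 + x3 1 * mcross u w 1 - x3 2 * mcross u w 2) * w i +
        m * mcross u w i := fun i => key_lemma h1 h2 i
  have hτs : τ s * mink w w = mink x3 (mcross u w) := by
    have hd := hNW.deriv
    rw [hτ s, hd]
    simp only [mink, hBs 0, hBs 1, hBs 2]
    linear_combination
      (-(m * (k⁻¹) ^ 4) * (w 0 * w 0 + w 1 * w 1 - w 2 * w 2)) * hwXc +
      (-(x3 0 * mcross u w 0 + x3 1 * mcross u w 1 - x3 2 * mcross u w 2) * (k⁻¹) ^ 2) * hk2c +
      ((x3 0 * mcross u w 0 + x3 1 * mcross u w 1 - x3 2 * mcross u w 2) * (k⁻¹ * k + 1)) * hz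
  -- Bertrand relation cleared of denominators
  have hbert : A * k * mink w w + C * mink x3 (mcross u w) = mink w w := by
    have hb := hbertrand s hsI
    rw [hκ, hmn s hsI, ← hkdef] at hb
    linear_combination mink w w * hb - C * hτs
  -- hyperbolic function relations
  have hcosh : (0 : ℝ) < Real.cosh ξ := Real.cosh_pos ξ
  have hsinh : A * Real.sinh ξ = C * Real.cosh ξ := by
    rw [Real.tanh_eq_sinh_div_cosh, div_eq_div_iff hcosh.ne' hA0] at hξ
    linarith
  have hε2 : ε ^ 2 = 1 := by rcases hε with rfl | rfl <;> norm_num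
  have hch : Real.cosh ξ ^ 2 - Real.sinh ξ ^ 2 = 1 := Real.cosh_sq_sub_sinh_sq ξ
  -- the formula for g at points of the interval
  have hgs_eq : ∀ t ∈ Set.Ioo a b, ∀ i, g t i =
      ε * Real.cosh ξ * d1 t i -
        ε * Real.sinh ξ * ((Real.sqrt (mink (d2 t) (d2 t)))⁻¹ * mcross (d1 t) (d2 t) i) := by
    intro t ht i
    rw [hg t, hT t, hB t, hT t, hN t, hmn t ht]
    fin_cases i <;>
      simp [mcross, Matrix.vecHead, Matrix.vecTail] <;> ring
  -- the derivative of g at s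
  have hgV : HasDerivAt g ((ε * Real.cosh ξ / A) • N s) s := by
    rw [hNs]
    apply hasDerivAt_pi.mpr
    intro i
    have hev : (fun t => g t i) =ᶠ[nhds s]
        (fun t => ε * Real.cosh ξ * d1 t i -
          ε * Real.sinh ξ *
            ((Real.sqrt (mink (d2 t) (d2 t)))⁻¹ * mcross (d1 t) (d2 t) i)) := by
      filter_upwards [Ioo_mem_nhds hsa hsb] with t ht
      exact hgs_eq t ht i
    refine HasDerivAt.congr_of_eventuallyEq ?_ hev
    have hd := ((hD2 s i).const_mul (ε * Real.cosh ξ)).sub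
      ((hKinv.mul (hXd i)).const_mul (ε * Real.sinh ξ))
    refine HasDerivAt.congr_deriv hd ?_
    refine Eq.symm ?_
    have hww : ∀ j, mcross w w j = 0 := by
      intro j; fin_cases j <;> simp [mcross] <;> ring
    have hbertc : A * k * (w 0 * w 0 + w 1 * w 1 - w 2 * w 2) +
        C * (x3 0 * mcross u w 0 + x3 1 * mcross u w 1 - x3 2 * mcross u w 2) =
        w 0 * w 0 + w 1 * w 1 - w 2 * w 2 := hbert
    simp only [Pi.smul_apply, smul_eq_mul, hww]
    linear_combination
      (ε * Real.sinh ξ * (k⁻¹) ^ 3) * keyc i +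
      ((ε * Real.sinh ξ * (k⁻¹) ^ 3 * mcross u x3 i -
        ε * Real.cosh ξ * k * (k⁻¹) ^ 3 * w i +
        ε * Real.cosh ξ * A⁻¹ * (k⁻¹) ^ 3 * w i)) * hk2c +
      ((-(ε * Real.sinh ξ * k⁻¹ * mcross u x3 i) * (k⁻¹ * k + 1) +
        ε * Real.cosh ξ * k * w i * k⁻¹ * (k⁻¹ * k + 1) +
        ε * Real.cosh ξ * w i -
        ε * Real.cosh ξ * A⁻¹ * w i * k⁻¹ * (k⁻¹ * k + 1))) * hz +
      (-(ε * A⁻¹ * (k⁻¹) ^ 3 *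
        (x3 0 * mcross u w 0 + x3 1 * mcross u w 1 - x3 2 * mcross u w 2) * w i)) * hsinh +
      ((ε * Real.sinh ξ * (k⁻¹) ^ 3 *
        (x3 0 * mcross u w 0 + x3 1 * mcross u w 1 - x3 2 * mcross u w 2) * w i +
        ε * Real.cosh ξ * k * (k⁻¹) ^ 3 *
          (w 0 * w 0 + w 1 * w 1 - w 2 * w 2) * w i)) * hA1 +
      (-(ε * Real.cosh ξ * A⁻¹ * (k⁻¹) ^ 3 * w i)) * hbertc
  have hderiv_g : deriv g s = (ε * Real.cosh ξ / A) • N s := hgV.deriv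
  -- claim 1
  have h0 : ∀ j, g s j = ε * Real.cosh ξ * u j -
      ε * Real.sinh ξ * (k⁻¹ * mcross u w j) := fun j => hgs_eq s hsI j
  have claim1 : mink (g s) (g s) = -1 := by
    simp only [mink, h0]
    linear_combination
      (-2 * ε ^ 2 * Real.cosh ξ * Real.sinh ξ * k⁻¹) * huXc +
      (ε ^ 2 * Real.sinh ξ ^ 2 * (k⁻¹) ^ 2) * hXXc +
      (ε ^ 2 * Real.sinh ξ ^ 2 * (k⁻¹) ^ 2 * (u 0 * w 0 + u 1 * w 1 - u 2 * w 2)) * h2c +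
      (ε ^ 2 * Real.cosh ξ ^ 2 - ε ^ 2 * Real.sinh ξ ^ 2 * (k⁻¹) ^ 2 *
        (w 0 * w 0 + w 1 * w 1 - w 2 * w 2)) * h1c +
      (-(ε ^ 2 * Real.sinh ξ ^ 2 * (k⁻¹) ^ 2)) * hk2c +
      (ε ^ 2 * Real.sinh ξ ^ 2 * (k⁻¹ * k + 1)) * hz +
      (-(ε ^ 2)) * hch + (-1 : ℝ) * hε2
  -- claim 3
  have claim3 : mink ((ε * Real.cosh ξ / A) • N s) ((ε * Real.cosh ξ / A) • N s) =
      Real.cosh ξ ^ 2 / A ^ 2 := by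
    rw [hNs]
    simp only [mink, Pi.smul_apply, smul_eq_mul]
    linear_combination
      (-(ε ^ 2 * Real.cosh ξ ^ 2 * (A⁻¹) ^ 2 * (k⁻¹) ^ 2)) * hk2c +
      (ε ^ 2 * Real.cosh ξ ^ 2 * (A⁻¹) ^ 2 * (k⁻¹ * k + 1)) * hz +
      (Real.cosh ξ ^ 2 * (A⁻¹) ^ 2) * hε2
  -- claim 4
  have hc1 : Real.cosh ξ * (Real.cosh ξ)⁻¹ = 1 := mul_inv_cancel₀ hcosh.ne'
  have hX0 : mcross u w 0 = u 1 * w 2 - u 2 * w 1 := rfl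
  have hX1 : mcross u w 1 = u 2 * w 0 - u 0 * w 2 := rfl
  have hX2 : mcross u w 2 = u 1 * w 0 - u 0 * w 1 := rfl
  have hcr0 : mcross u w 1 * w 2 - mcross u w 2 * w 1 =
      (w 0 * w 0 + w 1 * w 1 - w 2 * w 2) * u 0 -
        (u 0 * w 0 + u 1 * w 1 - u 2 * w 2) * w 0 := by simp [mcross]; ring
  have hcr1 : mcross u w 2 * w 0 - mcross u w 0 * w 2 =
      (w 0 * w 0 + w 1 * w 1 - w 2 * w 2) * u 1 -
        (u 0 * w 0 + u 1 * w 1 - u 2 * w 2) * w 1 := by simp [mcross]; ring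
  have hcr2 : mcross u w 1 * w 0 - mcross u w 0 * w 1 =
      (w 0 * w 0 + w 1 * w 1 - w 2 * w 2) * u 2 -
        (u 0 * w 0 + u 1 * w 1 - u 2 * w 2) * w 2 := by simp [mcross]; ring
  have claim4 : d1 s = (ε * Real.cosh ξ) • g s +
      (A * Real.tanh ξ) • mcross (g s) (deriv g s) := by
    rw [hderiv_g, hNs, Real.tanh_eq_sinh_div_cosh]
    funext i
    fin_cases i
    · show u 0 = ((ε * Real.cosh ξ) • g s +
        (A * (Real.sinh ξ / Real.cosh ξ)) • mcross (g s) ((ε * Real.cosh ξ / A) • k⁻¹ • w)) 0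
      simp only [Pi.add_apply, Pi.smul_apply, smul_eq_mul]
      rw [show mcross (g s) ((ε * Real.cosh ξ / A) • k⁻¹ • w) 0 =
        g s 1 * ((ε * Real.cosh ξ / A) • k⁻¹ • w) 2 - g s 2 * ((ε * Real.cosh ξ / A) • k⁻¹ • w) 1 from rfl]
      simp only [Pi.smul_apply, smul_eq_mul, h0]
      linear_combination
        ((-(ε ^ 2 * Real.cosh ξ * Real.sinh ξ * k⁻¹ * mcross u w 0 * A * A⁻¹) +
          ε ^ 2 * Real.sinh ξ ^ 2 * (k⁻¹) ^ 2 *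
            (mcross u w 1 * w 2 - mcross u w 2 * w 1) * A * A⁻¹)) * hc1 +
        ((-(ε ^ 2 * Real.cosh ξ * Real.sinh ξ * k⁻¹ * mcross u w 0) +
          ε ^ 2 * Real.sinh ξ ^ 2 * (k⁻¹) ^ 2 *
            (mcross u w 1 * w 2 - mcross u w 2 * w 1))) * hA1 +
        (ε ^ 2 * Real.sinh ξ ^ 2 * (k⁻¹) ^ 2) * hcr0 +
        (ε ^ 2 * A * Real.cosh ξ ^ 2 * A⁻¹ * (Real.cosh ξ)⁻¹ * Real.sinh ξ * k⁻¹) * hX0 +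
        (-(ε ^ 2 * Real.sinh ξ ^ 2 * (k⁻¹) ^ 2 * w 0)) * h2c +
        (-(ε ^ 2 * Real.sinh ξ ^ 2 * u 0 * (k⁻¹) ^ 2)) * hk2c +
        (ε ^ 2 * Real.sinh ξ ^ 2 * u 0 * (k⁻¹ * k + 1)) * hz +
        (-(ε ^ 2 * u 0)) * hch + (-(u 0)) * hε2
    · show u 1 = ((ε * Real.cosh ξ) • g s +
        (A * (Real.sinh ξ / Real.cosh ξ)) • mcross (g s) ((ε * Real.cosh ξ / A) • k⁻¹ • w)) 1
      simp only [Pi.add_apply, Pi.smul_apply, smul_eq_mul]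
      rw [show mcross (g s) ((ε * Real.cosh ξ / A) • k⁻¹ • w) 1 =
        g s 2 * ((ε * Real.cosh ξ / A) • k⁻¹ • w) 0 - g s 0 * ((ε * Real.cosh ξ / A) • k⁻¹ • w) 2 from rfl]
      simp only [Pi.smul_apply, smul_eq_mul, h0]
      linear_combination
        ((-(ε ^ 2 * Real.cosh ξ * Real.sinh ξ * k⁻¹ * mcross u w 1 * A * A⁻¹) +
          ε ^ 2 * Real.sinh ξ ^ 2 * (k⁻¹) ^ 2 *
            (mcross u w 2 * w 0 - mcross u w 0 * w 2) * A * A⁻¹)) * hc1 +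
        ((-(ε ^ 2 * Real.cosh ξ * Real.sinh ξ * k⁻¹ * mcross u w 1) +
          ε ^ 2 * Real.sinh ξ ^ 2 * (k⁻¹) ^ 2 *
            (mcross u w 2 * w 0 - mcross u w 0 * w 2))) * hA1 +
        (ε ^ 2 * Real.sinh ξ ^ 2 * (k⁻¹) ^ 2) * hcr1 +
        (ε ^ 2 * A * Real.cosh ξ ^ 2 * A⁻¹ * (Real.cosh ξ)⁻¹ * Real.sinh ξ * k⁻¹) * hX1 +
        (-(ε ^ 2 * Real.sinh ξ ^ 2 * (k⁻¹) ^ 2 * w 1)) * h2c +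
        (-(ε ^ 2 * Real.sinh ξ ^ 2 * u 1 * (k⁻¹) ^ 2)) * hk2c +
        (ε ^ 2 * Real.sinh ξ ^ 2 * u 1 * (k⁻¹ * k + 1)) * hz +
        (-(ε ^ 2 * u 1)) * hch + (-(u 1)) * hε2
    · show u 2 = ((ε * Real.cosh ξ) • g s +
        (A * (Real.sinh ξ / Real.cosh ξ)) • mcross (g s) ((ε * Real.cosh ξ / A) • k⁻¹ • w)) 2
      simp only [Pi.add_apply, Pi.smul_apply, smul_eq_mul]
      rw [show mcross (g s) ((ε * Real.cosh ξ / A) • k⁻¹ • w) 2 =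
        g s 1 * ((ε * Real.cosh ξ / A) • k⁻¹ • w) 0 - g s 0 * ((ε * Real.cosh ξ / A) • k⁻¹ • w) 1 from rfl]
      simp only [Pi.smul_apply, smul_eq_mul, h0]
      linear_combination
        ((-(ε ^ 2 * Real.cosh ξ * Real.sinh ξ * k⁻¹ * mcross u w 2 * A * A⁻¹) +
          ε ^ 2 * Real.sinh ξ ^ 2 * (k⁻¹) ^ 2 *
            (mcross u w 1 * w 0 - mcross u w 0 * w 1) * A * A⁻¹)) * hc1 +
        ((-(ε ^ 2 * Real.cosh ξ * Real.sinh ξ * k⁻¹ * mcross u w 2) +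
          ε ^ 2 * Real.sinh ξ ^ 2 * (k⁻¹) ^ 2 *
            (mcross u w 1 * w 0 - mcross u w 0 * w 1))) * hA1 +
        (ε ^ 2 * Real.sinh ξ ^ 2 * (k⁻¹) ^ 2) * hcr2 +
        (ε ^ 2 * A * Real.cosh ξ ^ 2 * A⁻¹ * (Real.cosh ξ)⁻¹ * Real.sinh ξ * k⁻¹) * hX2 +
        (-(ε ^ 2 * Real.sinh ξ ^ 2 * (k⁻¹) ^ 2 * w 2)) * h2c +
        (-(ε ^ 2 * Real.sinh ξ ^ 2 * u 2 * (k⁻¹) ^ 2)) * hk2c +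
        (ε ^ 2 * Real.sinh ξ ^ 2 * u 2 * (k⁻¹ * k + 1)) * hz +
        (-(ε ^ 2 * u 2)) * hch + (-(u 2)) * hε2
  exact ⟨claim1, hderiv_g, by rw [hderiv_g]; exact claim3, claim4⟩
end
end

section
/- Let g : I → ℝ³ be a smooth unit speed space-like curve on H² (⟨g,g⟩ = −1, ⟨g',g'⟩ = 1) with geodesic curvature κ_g. Let a > 0 and ξ₂ ∈ ℝ be constants, assume tanh(ξ₂)·κ_g(v) < 1 and κ_g(v) ≠ tanh(ξ₂) for all v ∈ I, and let γ(v) = a·∫₀ᵛ g(t)dt + a·tanh(ξ₂)·∫₀ᵛ g(t) × g'(t) dt, with curvature κ and torsion τ given by κ = ‖γ' × γ''‖ / (−⟨γ', γ'⟩)^{3/2} and τ = det(γ', γ'', γ''') / ‖γ' × γ''‖². Then g is a part of a pseudo-circle on H² (i.e. κ_g'(v) = 0 for all v ∈ I) if and only if γ is a helix, i.e. both κ and τ are non-zero constant functions on I (equivalently, τ/κ is constant). -/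
noncomputable section

open Real

set_option maxHeartbeats 1000000 in
lemma mcross_self (x : Fin 3 → ℝ) : mcross x x = 0 := by
  funext i; fin_cases i <;> simp [mcross] <;> ring

lemma hasDerivAt_mcross' {u w : ℝ → Fin 3 → ℝ} {u' w' : Fin 3 → ℝ} {x : ℝ}
    (hu : HasDerivAt u u' x) (hw : HasDerivAt w w' x) :
    HasDerivAt (fun t => mcross (u t) (w t)) (mcross u' (w x) + mcross (u x) w') x := by
  apply hasDerivAt_pi.2
  intro i
  have h1 := hasDerivAt_pi.1 hu
  have h2 := hasDerivAt_pi.1 hw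
  fin_cases i <;>
    [ (convert ((h1 1).mul (h2 2)).sub ((h1 2).mul (h2 1)) using 1);
      (convert ((h1 2).mul (h2 0)).sub ((h1 0).mul (h2 2)) using 1);
      (convert ((h1 1).mul (h2 0)).sub ((h1 0).mul (h2 1)) using 1) ] <;>
    simp [mcross, Pi.mul_def, Pi.sub_def] <;> ring

lemma hasDerivAt_mink' {u w : ℝ → Fin 3 → ℝ} {u' w' : Fin 3 → ℝ} {x : ℝ}
    (hu : HasDerivAt u u' x) (hw : HasDerivAt w w' x) :
    HasDerivAt (fun t => mink (u t) (w t)) (mink u' (w x) + mink (u x) w') x := by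
  have h1 := hasDerivAt_pi.1 hu
  have h2 := hasDerivAt_pi.1 hw
  convert (((h1 0).mul (h2 0)).add ((h1 1).mul (h2 1))).sub ((h1 2).mul (h2 2)) using 1 <;>
    [rfl; rfl; rfl; (simp [mink] <;> ring)]

lemma continuous_mcross' {u w : ℝ → Fin 3 → ℝ} (hu : Continuous u) (hw : Continuous w) :
    Continuous (fun t => mcross (u t) (w t)) := by
  apply continuous_pi
  intro i
  fin_cases i <;> simp only [mcross, Matrix.cons_val_zero, Matrix.cons_val_one, Matrix.head_cons,
    Matrix.cons_val_two, Matrix.tail_cons] <;>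
    exact (((continuous_apply _).comp hu).mul ((continuous_apply _).comp hw)).sub
      (((continuous_apply _).comp hu).mul ((continuous_apply _).comp hw))

set_option maxHeartbeats 2000000 in
/-- the unit speed space-like curve g on H² is a part of a pseudo-circle
(κ_g' ≡ 0 on I) iff the corresponding time-like Bertrand curve γ is a helix,
i.e. its curvature κ and torsion τ are non-zero constant functions on I. -/
theorem hyperbolic_pseudo_circle_iff_bertrand_helix
    (a b : ℝ) (I : Set ℝ) (hI : I = Set.Ioo a b) (h0 : (0:ℝ) ∈ I)
    (g : ℝ → Fin 3 → ℝ) (hg : ContDiff ℝ (⊤ : ℕ∞) g)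
    (hg1 : ∀ v ∈ I, mink (g v) (g v) = -1)
    (hg2 : ∀ v ∈ I, mink (deriv g v) (deriv g v) = 1)
    (κg : ℝ → ℝ) (hκg : ∀ v, κg v = mdet (g v) (deriv g v) (deriv (deriv g) v))
    (A ξ : ℝ) (hA : 0 < A)
    (hξκ : ∀ v ∈ I, Real.tanh ξ * κg v < 1)
    (γ : ℝ → Fin 3 → ℝ)
    (hγ : ∀ v, γ v = A • (∫ w in (0:ℝ)..v, g w) +
        (A * Real.tanh ξ) • (∫ w in (0:ℝ)..v, mcross (g w) (deriv g w)))
    (κ τ : ℝ → ℝ)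
    (hκdef : ∀ v, κ v = mnorm (mcross (deriv γ v) (deriv (deriv γ) v)) /
        (-(mink (deriv γ v) (deriv γ v))) ^ (3/2 : ℝ))
    (hτdef : ∀ v, τ v =
        mdet (deriv γ v) (deriv (deriv γ) v) (deriv (deriv (deriv γ)) v) /
        (mnorm (mcross (deriv γ v) (deriv (deriv γ) v))) ^ 2)
    (hne : ∀ v ∈ I, κg v ≠ Real.tanh ξ) :
    (∀ v ∈ I, deriv κg v = 0) ↔
      ∃ c₁ c₂ : ℝ, c₁ ≠ 0 ∧ c₂ ≠ 0 ∧ ∀ v ∈ I, κ v = c₁ ∧ τ v = c₂ := by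


  have hT2 : (Real.tanh ξ)^2 < 1 := by
    have hc := Real.cosh_pos ξ
    have hcs := Real.cosh_sq_sub_sinh_sq ξ
    rw [Real.tanh_eq_sinh_div_cosh, div_pow, div_lt_one (by positivity)]
    nlinarith
  have hden : 0 < A*(1-(Real.tanh ξ)^2) := by nlinarith
  have hdg : Differentiable ℝ g := hg.differentiable (by simp)
  have hg' : ContDiff ℝ (↑(⊤:ℕ∞)) g := hg.of_le (by simp)
  have hgd1 : ContDiff ℝ (↑(⊤:ℕ∞)) (deriv g) := (contDiff_infty_iff_deriv.mp hg').2
  have hdg1 : Differentiable ℝ (deriv g) := hgd1.differentiable (by simp)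
  have hgd2 : ContDiff ℝ (↑(⊤:ℕ∞)) (deriv (deriv g)) := (contDiff_infty_iff_deriv.mp hgd1).2
  have hdg2 : Differentiable ℝ (deriv (deriv g)) := hgd2.differentiable (by simp)
  have hgD : ∀ v : ℝ, HasDerivAt g (deriv g v) v := fun v => (hdg v).hasDerivAt
  have hg1D : ∀ v : ℝ, HasDerivAt (deriv g) (deriv (deriv g) v) v := fun v => (hdg1 v).hasDerivAt
  have hg2D : ∀ v : ℝ, HasDerivAt (deriv (deriv g)) (deriv (deriv (deriv g)) v) v :=
    fun v => (hdg2 v).hasDerivAt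
  have hNc : Continuous (fun t => mcross (g t) (deriv g t)) :=
    continuous_mcross' hg.continuous hgd1.continuous
  have hγfun : γ = fun v => A • (∫ w in (0:ℝ)..v, g w) +
      (A * Real.tanh ξ) • (∫ w in (0:ℝ)..v, mcross (g w) (deriv g w)) := funext hγ
  have hBall : ∀ v : ℝ, HasDerivAt γ (A • g v + (A * Real.tanh ξ) • mcross (g v) (deriv g v)) v := by
    intro v
    rw [hγfun]
    have h1 : HasDerivAt (fun u => ∫ w in (0:ℝ)..u, g w) (g v) v :=
      intervalIntegral.integral_hasDerivAt_right (hg.continuous.intervalIntegrable _ _)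
        (hg.continuous.stronglyMeasurableAtFilter _ _) hg.continuous.continuousAt
    have h2 : HasDerivAt (fun u => ∫ w in (0:ℝ)..u, mcross (g w) (deriv g w))
        (mcross (g v) (deriv g v)) v :=
      intervalIntegral.integral_hasDerivAt_right (hNc.intervalIntegrable _ _)
        (hNc.stronglyMeasurableAtFilter _ _) hNc.continuousAt
    exact (h1.const_smul A).add (h2.const_smul (A * Real.tanh ξ))
  have hderiv1 : deriv γ = fun v => A • g v + (A * Real.tanh ξ) • mcross (g v) (deriv g v) :=
    funext fun v => (hBall v).deriv
  have hB2all : ∀ v : ℝ, HasDerivAt (fun v => A • g v + (A * Real.tanh ξ) • mcross (g v) (deriv g v))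
      (A • deriv g v + (A * Real.tanh ξ) • mcross (g v) (deriv (deriv g) v)) v := by
    intro v
    have hcr := hasDerivAt_mcross' (hgD v) (hg1D v)
    rw [mcross_self, zero_add] at hcr
    exact ((hgD v).const_smul A).add (hcr.const_smul (A * Real.tanh ξ))
  have hderiv2 : deriv (deriv γ) = fun v => A • deriv g v +
      (A * Real.tanh ξ) • mcross (g v) (deriv (deriv g) v) := by
    rw [hderiv1]; exact funext fun v => (hB2all v).deriv
  have hB3all : ∀ v : ℝ, HasDerivAt (fun v => A • deriv g v + (A * Real.tanh ξ) • mcross (g v) (deriv (deriv g) v))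
      (A • deriv (deriv g) v + (A * Real.tanh ξ) •
        (mcross (deriv g v) (deriv (deriv g) v) + mcross (g v) (deriv (deriv (deriv g)) v))) v := by
    intro v
    exact ((hg1D v).const_smul A).add ((hasDerivAt_mcross' (hgD v) (hg2D v)).const_smul (A * Real.tanh ξ))
  have hderiv3 : deriv (deriv (deriv γ)) = fun v => A • deriv (deriv g) v + (A * Real.tanh ξ) •
      (mcross (deriv g v) (deriv (deriv g) v) + mcross (g v) (deriv (deriv (deriv g)) v)) := by
    rw [hderiv2]; exact funext fun v => (hB3all v).deriv
  have hIopen : IsOpen I := by rw [hI]; exact isOpen_Ioo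
  have keyzero : ∀ (f : ℝ → ℝ) (c y v : ℝ), v ∈ I → (∀ u ∈ I, f u = c) → HasDerivAt f y v → y = 0 := by
    intro f c y v hv hconst hder
    have hev : f =ᶠ[nhds v] fun _ => c := Filter.eventually_of_mem (hIopen.mem_nhds hv) hconst
    have h1 : deriv f v = y := hder.deriv
    rw [hev.deriv_eq, deriv_const] at h1
    exact h1.symm
  have hm3' : ∀ v ∈ I, mink (g v) (deriv g v) = 0 := by
    intro v hv
    have h0' := keyzero _ (-1) _ v hv hg1 (hasDerivAt_mink' (hgD v) (hgD v))
    have hcomm : mink (deriv g v) (g v) = mink (g v) (deriv g v) := by simp only [mink]; ring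
    rw [hcomm] at h0'
    linarith
  have hm4' : ∀ v ∈ I, mink (g v) (deriv (deriv g) v) = -1 := by
    intro v hv
    have h0' := keyzero _ 0 _ v hv hm3' (hasDerivAt_mink' (hgD v) (hg1D v))
    have h2 := hg2 v hv
    linarith
  have hm5' : ∀ v ∈ I, mink (deriv g v) (deriv (deriv g) v) = 0 := by
    intro v hv
    have h0' := keyzero _ 1 _ v hv hg2 (hasDerivAt_mink' (hg1D v) (hg1D v))
    have hcomm : mink (deriv (deriv g) v) (deriv g v) = mink (deriv g v) (deriv (deriv g) v) := by
      simp only [mink]; ring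
    rw [hcomm] at h0'
    linarith
  have hm6' : ∀ v ∈ I, mink (g v) (deriv (deriv (deriv g)) v) = 0 := by
    intro v hv
    have h0' := keyzero _ (-1) _ v hv hm4' (hasDerivAt_mink' (hgD v) (hg2D v))
    have h2 := hm5' v hv
    linarith
  have hm7' : ∀ v ∈ I, mink (deriv (deriv g) v) (deriv (deriv g) v) +
      mink (deriv g v) (deriv (deriv (deriv g)) v) = 0 := by
    intro v hv
    exact keyzero _ 0 _ v hv hm5' (hasDerivAt_mink' (hg1D v) (hg2D v))
  have hκτ : ∀ v ∈ I, κ v = (1 - Real.tanh ξ * κg v)/(A*(1-(Real.tanh ξ)^2)) ∧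
      τ v = (κg v - Real.tanh ξ)/(A*(1-(Real.tanh ξ)^2)) := by
    intro v hv
    have hm1 := hg1 v hv
    have hm2 := hg2 v hv
    have hm3 := hm3' v hv
    have hm4 := hm4' v hv
    have hm5 := hm5' v hv
    have hm6 := hm6' v hv
    have hm7 := hm7' v hv
    simp only [mink] at hm1 hm2 hm3 hm4 hm5 hm6 hm7
    have hkc := hκg v
    simp only [mdet, Matrix.det_fin_three, Matrix.of_apply, Matrix.cons_val', Matrix.cons_val_zero, Matrix.cons_val_one, Matrix.head_cons, Matrix.cons_val_two, Matrix.tail_cons, Matrix.empty_val', Matrix.cons_val_fin_one, Matrix.head_fin_const, Fin.isValue, Fin.zero_eta, Fin.mk_one, Fin.reduceFinMk, Pi.add_apply, Pi.smul_apply, smul_eq_mul, mcross, Pi.neg_apply, neg_mul] at hkc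
    have h1Tk : 0 < 1 - Real.tanh ξ * κg v := by have := hξκ v hv; linarith
    have hR0 : deriv (deriv g) v 0 = g v 0 + κg v * (g v 1 * deriv g v 2 - g v 2 * deriv g v 1) := by
      linear_combination (((-1:ℝ)*(g v 0))) * hm4 + (((1:ℝ)*(deriv g v 0))) * hm5 + (((1:ℝ)*(g v 2)*(deriv g v 1) + (-1:ℝ)*(g v 1)*(deriv g v 2))) * hkc + (((-1:ℝ)*(deriv g v 0)*(deriv g v 0)*(deriv (deriv g) v 0) + (-1:ℝ)*(deriv g v 0)*(deriv g v 1)*(deriv (deriv g) v 1) + (1:ℝ)*(deriv g v 0)*(deriv g v 2)*(deriv (deriv g) v 2) + (1:ℝ)*(deriv (deriv g) v 0))) * hm1 + (((1:ℝ)*(g v 1)*(g v 1)*(deriv (deriv g) v 0) + (-1:ℝ)*(g v 2)*(g v 2)*(deriv (deriv g) v 0) + (-1:ℝ)*(g v 0)*(g v 1)*(deriv (deriv g) v 1) + (1:ℝ)*(g v 0)*(g v 2)*(deriv (deriv g) v 2))) * hm2 + (((1:ℝ)*(g v 0)*(deriv g v 0)*(deriv (deriv g) v 0) + (-1:ℝ)*(g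 v 1)*(deriv g v 1)*(deriv (deriv g) v 0) + (1:ℝ)*(g v 2)*(deriv g v 2)*(deriv (deriv g) v 0) + (1:ℝ)*(g v 1)*(deriv g v 0)*(deriv (deriv g) v 1) + (1:ℝ)*(g v 0)*(deriv g v 1)*(deriv (deriv g) v 1) + (-1:ℝ)*(g v 2)*(deriv g v 0)*(deriv (deriv g) v 2) + (-1:ℝ)*(g v 0)*(deriv g v 2)*(deriv (deriv g) v 2))) * hm3
    have hR1 : deriv (deriv g) v 1 = g v 1 + κg v * (g v 2 * deriv g v 0 - g v 0 * deriv g v 2) := by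
      linear_combination (((-1:ℝ)*(g v 1))) * hm4 + (((1:ℝ)*(deriv g v 1))) * hm5 + (((-1:ℝ)*(g v 2)*(deriv g v 0) + (1:ℝ)*(g v 0)*(deriv g v 2))) * hkc + (((-1:ℝ)*(deriv g v 0)*(deriv g v 1)*(deriv (deriv g) v 0) + (1:ℝ)*(deriv g v 0)*(deriv g v 0)*(deriv (deriv g) v 1) + (-1:ℝ)*(deriv g v 2)*(deriv g v 2)*(deriv (deriv g) v 1) + (1:ℝ)*(deriv g v 1)*(deriv g v 2)*(deriv (deriv g) v 2))) * hm1 + (((-1:ℝ)*(g v 0)*(g v 1)*(deriv (deriv g) v 0) + (-1:ℝ)*(g v 1)*(g v 1)*(deriv (deriv g) v 1) + (1:ℝ)*(g v 1)*(g v 2)*(deriv (deriv g) v 2) + (-1:ℝ)*(deriv (deriv g) v 1))) * hm2 + (((1:ℝ)*(g v 1)*(deriv g v 0)*(deriv (deriv g) v 0) + (1:ℝ)*(g v 0)*(deriv g v 1)*(deriv (deriv g) v 0) + (-1:ℝ)*(g v 0)*(deriv g v 0)*(deriv (deriv g) v 1) + (1:ℝ)*(g v 1)*(deriv g v 1)*(deriv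 (deriv g) v 1) + (1:ℝ)*(g v 2)*(deriv g v 2)*(deriv (deriv g) v 1) + (-1:ℝ)*(g v 2)*(deriv g v 1)*(deriv (deriv g) v 2) + (-1:ℝ)*(g v 1)*(deriv g v 2)*(deriv (deriv g) v 2))) * hm3
    have hR2 : deriv (deriv g) v 2 = g v 2 + κg v * (g v 1 * deriv g v 0 - g v 0 * deriv g v 1) := by
      linear_combination (((-1:ℝ)*(g v 2))) * hm4 + (((1:ℝ)*(deriv g v 2))) * hm5 + (((-1:ℝ)*(g v 1)*(deriv g v 0) + (1:ℝ)*(g v 0)*(deriv g v 1))) * hkc + (((-1:ℝ)*(deriv g v 0)*(deriv g v 2)*(deriv (deriv g) v 0) + (-1:ℝ)*(deriv g v 1)*(deriv g v 2)*(deriv (deriv g) v 1) + (1:ℝ)*(deriv g v 0)*(deriv g v 0)*(deriv (deriv g) v 2) + (1:ℝ)*(deriv g v 1)*(deriv g v 1)*(deriv (deriv g) v 2))) * hm1 + (((-1:ℝ)*(g v 0)*(g v 2)*(deriv (deriv g) v 0) + (-1:ℝ)*(g v 1)*(g v 2)*(deriv (deriv g) v 1) + (1:ℝ)*(g v 2)*(g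 v 2)*(deriv (deriv g) v 2) + (-1:ℝ)*(deriv (deriv g) v 2))) * hm2 + (((1:ℝ)*(g v 2)*(deriv g v 0)*(deriv (deriv g) v 0) + (1:ℝ)*(g v 0)*(deriv g v 2)*(deriv (deriv g) v 0) + (1:ℝ)*(g v 2)*(deriv g v 1)*(deriv (deriv g) v 1) + (1:ℝ)*(g v 1)*(deriv g v 2)*(deriv (deriv g) v 1) + (-1:ℝ)*(g v 0)*(deriv g v 0)*(deriv (deriv g) v 2) + (-1:ℝ)*(g v 1)*(deriv g v 1)*(deriv (deriv g) v 2) + (-1:ℝ)*(g v 2)*(deriv g v 2)*(deriv (deriv g) v 2))) * hm3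
    have hQS : deriv g v 0 * deriv (deriv (deriv g)) v 0 + deriv g v 1 * deriv (deriv (deriv g)) v 1
        - deriv g v 2 * deriv (deriv (deriv g)) v 2 = 1 - κg v^2 := by
      linear_combination (((1:ℝ))) * hm7 + (((1:ℝ)*(g v 2)*(deriv g v 1)*(κg v) + (-1:ℝ)*(g v 1)*(deriv g v 2)*(κg v) + (-1:ℝ)*(g v 0) + (-1:ℝ)*(deriv (deriv g) v 0))) * hR0 + (((-1:ℝ)*(g v 2)*(deriv g v 0)*(κg v) + (1:ℝ)*(g v 0)*(deriv g v 2)*(κg v) + (-1:ℝ)*(g v 1) + (-1:ℝ)*(deriv (deriv g) v 1))) * hR1 + (((1:ℝ)*(g v 1)*(deriv g v 0)*(κg v) + (-1:ℝ)*(g v 0)*(deriv g v 1)*(κg v) + (1:ℝ)*(g v 2) + (1:ℝ)*(deriv (deriv g) v 2))) * hR2 + (((1:ℝ)*(deriv g v 0)*(deriv g v 0)*(κg v)*(κg v) + (1:ℝ)*(deriv g v 1)*(deriv g v 1)*(κg v)*(κg v) + (-1:ℝ)*(deriv g v 2)*(deriv g v 2)*(κg v)*(κg v) + (-1:ℝ)))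 * hm1 + (((-1:ℝ)*(κg v)*(κg v))) * hm2 + (((-1:ℝ)*(g v 0)*(deriv g v 0)*(κg v)*(κg v) + (-1:ℝ)*(g v 1)*(deriv g v 1)*(κg v)*(κg v) + (1:ℝ)*(g v 2)*(deriv g v 2)*(κg v)*(κg v))) * hm3
    obtain ⟨w, hw⟩ : ∃ w : ℝ, mink (mcross (g v) (deriv g v)) (deriv (deriv (deriv g)) v) = w := ⟨_, rfl⟩
    simp only [Pi.add_apply, Pi.smul_apply, smul_eq_mul, mink, mcross, Matrix.cons_val_zero, Matrix.cons_val_one, Matrix.head_cons, Matrix.cons_val_two, Matrix.tail_cons, Fin.isValue, Fin.zero_eta, Fin.mk_one, Fin.reduceFinMk, Pi.neg_apply, neg_mul] at hw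
    have hS0 : deriv (deriv (deriv g)) v 0 = (1 - κg v^2) * deriv g v 0 + w * (g v 1 * deriv g v 2 - g v 2 * deriv g v 1) := by
      linear_combination (((-1:ℝ)*(g v 0))) * hm6 + (((1:ℝ)*(deriv g v 0))) * hQS + (((-1:ℝ)*(g v 2)*(deriv g v 1) + (1:ℝ)*(g v 1)*(deriv g v 2))) * hw + (((-1:ℝ)*(deriv g v 0)*(deriv g v 0)*(deriv (deriv (deriv g)) v 0) + (-1:ℝ)*(deriv g v 0)*(deriv g v 1)*(deriv (deriv (deriv g)) v 1) + (1:ℝ)*(deriv g v 0)*(deriv g v 2)*(deriv (deriv (deriv g)) v 2) + (1:ℝ)*(deriv (deriv (deriv g)) v 0))) * hm1 + (((1:ℝ)*(g v 1)*(g v 1)*(deriv (deriv (deriv g)) v 0) + (-1:ℝ)*(g v 2)*(g v 2)*(deriv (deriv (deriv g)) v 0) + (-1:ℝ)*(g v 0)*(g v 1)*(deriv (deriv (deriv g)) v 1) + (1:ℝ)*(g v 0)*(g v 2)*(deriv (deriv (deriv g)) v 2))) * hm2 + (((1:ℝ)*(g v 0)*(deriv g v 0)*(deriv (deriv (deriv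 g)) v 0) + (-1:ℝ)*(g v 1)*(deriv g v 1)*(deriv (deriv (deriv g)) v 0) + (1:ℝ)*(g v 2)*(deriv g v 2)*(deriv (deriv (deriv g)) v 0) + (1:ℝ)*(g v 1)*(deriv g v 0)*(deriv (deriv (deriv g)) v 1) + (1:ℝ)*(g v 0)*(deriv g v 1)*(deriv (deriv (deriv g)) v 1) + (-1:ℝ)*(g v 2)*(deriv g v 0)*(deriv (deriv (deriv g)) v 2) + (-1:ℝ)*(g v 0)*(deriv g v 2)*(deriv (deriv (deriv g)) v 2))) * hm3
    have hS1 : deriv (deriv (deriv g)) v 1 = (1 - κg v^2) * deriv g v 1 + w * (g v 2 * deriv g v 0 - g v 0 * deriv g v 2) := by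
      linear_combination (((-1:ℝ)*(g v 1))) * hm6 + (((1:ℝ)*(deriv g v 1))) * hQS + (((1:ℝ)*(g v 2)*(deriv g v 0) + (-1:ℝ)*(g v 0)*(deriv g v 2))) * hw + (((-1:ℝ)*(deriv g v 0)*(deriv g v 1)*(deriv (deriv (deriv g)) v 0) + (1:ℝ)*(deriv g v 0)*(deriv g v 0)*(deriv (deriv (deriv g)) v 1) + (-1:ℝ)*(deriv g v 2)*(deriv g v 2)*(deriv (deriv (deriv g)) v 1) + (1:ℝ)*(deriv g v 1)*(deriv g v 2)*(deriv (deriv (deriv g)) v 2))) * hm1 + (((-1:ℝ)*(g v 0)*(g v 1)*(deriv (deriv (deriv g)) v 0) + (-1:ℝ)*(g v 1)*(g v 1)*(deriv (deriv (deriv g)) v 1) + (1:ℝ)*(g v 1)*(g v 2)*(deriv (deriv (deriv g)) v 2) + (-1:ℝ)*(deriv (deriv (deriv g)) v 1))) * hm2 + (((1:ℝ)*(g v 1)*(deriv g v 0)*(deriv (deriv (deriv g)) v 0) + (1:ℝ)*(g v 0)*(deriv g v 1)*(deriv (deriv (deriv g)) v 0) + (-1:ℝ)*(g v 0)*(deriv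 g v 0)*(deriv (deriv (deriv g)) v 1) + (1:ℝ)*(g v 1)*(deriv g v 1)*(deriv (deriv (deriv g)) v 1) + (1:ℝ)*(g v 2)*(deriv g v 2)*(deriv (deriv (deriv g)) v 1) + (-1:ℝ)*(g v 2)*(deriv g v 1)*(deriv (deriv (deriv g)) v 2) + (-1:ℝ)*(g v 1)*(deriv g v 2)*(deriv (deriv (deriv g)) v 2))) * hm3
    have hS2 : deriv (deriv (deriv g)) v 2 = (1 - κg v^2) * deriv g v 2 + w * (g v 1 * deriv g v 0 - g v 0 * deriv g v 1) := by
      linear_combination (((-1:ℝ)*(g v 2))) * hm6 + (((1:ℝ)*(deriv g v 2))) * hQS + (((1:ℝ)*(g v 1)*(deriv g v 0) + (-1:ℝ)*(g v 0)*(deriv g v 1))) * hw + (((-1:ℝ)*(deriv g v 0)*(deriv g v 2)*(deriv (deriv (deriv g)) v 0) + (-1:ℝ)*(deriv g v 1)*(deriv g v 2)*(deriv (deriv (deriv g)) v 1) + (1:ℝ)*(deriv g v 0)*(deriv g v 0)*(deriv (deriv (deriv g)) v 2) + (1:ℝ)*(deriv g v 1)*(deriv g v 1)*(deriv (deriv (deriv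 g)) v 2))) * hm1 + (((-1:ℝ)*(g v 0)*(g v 2)*(deriv (deriv (deriv g)) v 0) + (-1:ℝ)*(g v 1)*(g v 2)*(deriv (deriv (deriv g)) v 1) + (1:ℝ)*(g v 2)*(g v 2)*(deriv (deriv (deriv g)) v 2) + (-1:ℝ)*(deriv (deriv (deriv g)) v 2))) * hm2 + (((1:ℝ)*(g v 2)*(deriv g v 0)*(deriv (deriv (deriv g)) v 0) + (1:ℝ)*(g v 0)*(deriv g v 2)*(deriv (deriv (deriv g)) v 0) + (1:ℝ)*(g v 2)*(deriv g v 1)*(deriv (deriv (deriv g)) v 1) + (1:ℝ)*(g v 1)*(deriv g v 2)*(deriv (deriv (deriv g)) v 1) + (-1:ℝ)*(g v 0)*(deriv g v 0)*(deriv (deriv (deriv g)) v 2) + (-1:ℝ)*(g v 1)*(deriv g v 1)*(deriv (deriv (deriv g)) v 2) + (-1:ℝ)*(g v 2)*(deriv g v 2)*(deriv (deriv (deriv g)) v 2))) * hm3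
    have hBv : deriv γ v = A • g v + (A * Real.tanh ξ) • mcross (g v) (deriv g v) := by
      rw [hderiv1]
    have hCv : deriv (deriv γ) v = (A*(1 - Real.tanh ξ * κg v)) • deriv g v := by
      rw [hderiv2]
      funext j
      fin_cases j
      · simp only [Pi.add_apply, Pi.smul_apply, smul_eq_mul, mink, mcross, Matrix.cons_val_zero, Matrix.cons_val_one, Matrix.head_cons, Matrix.cons_val_two, Matrix.tail_cons, Fin.isValue, Fin.zero_eta, Fin.mk_one, Fin.reduceFinMk, Pi.neg_apply, neg_mul]
        linear_combination (((-1:ℝ)*(g v 2)*A*(Real.tanh ξ))) * hR1 + (((1:ℝ)*(g v 1)*A*(Real.tanh ξ))) * hR2 + (((1:ℝ)*(deriv g v 0)*(κg v)*A*(Real.tanh ξ))) * hm1 + (((-1:ℝ)*(g v 0)*(κg v)*A*(Real.tanh ξ))) * hm3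
      · simp only [Pi.add_apply, Pi.smul_apply, smul_eq_mul, mink, mcross, Matrix.cons_val_zero, Matrix.cons_val_one, Matrix.head_cons, Matrix.cons_val_two, Matrix.tail_cons, Fin.isValue, Fin.zero_eta, Fin.mk_one, Fin.reduceFinMk, Pi.neg_apply, neg_mul]
        linear_combination (((1:ℝ)*(g v 2)*A*(Real.tanh ξ))) * hR0 + (((-1:ℝ)*(g v 0)*A*(Real.tanh ξ))) * hR2 + (((1:ℝ)*(deriv g v 1)*(κg v)*A*(Real.tanh ξ))) * hm1 + (((-1:ℝ)*(g v 1)*(κg v)*A*(Real.tanh ξ))) * hm3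
      · simp only [Pi.add_apply, Pi.smul_apply, smul_eq_mul, mink, mcross, Matrix.cons_val_zero, Matrix.cons_val_one, Matrix.head_cons, Matrix.cons_val_two, Matrix.tail_cons, Fin.isValue, Fin.zero_eta, Fin.mk_one, Fin.reduceFinMk, Pi.neg_apply, neg_mul]
        linear_combination (((1:ℝ)*(g v 1)*A*(Real.tanh ξ))) * hR0 + (((-1:ℝ)*(g v 0)*A*(Real.tanh ξ))) * hR1 + (((1:ℝ)*(deriv g v 2)*(κg v)*A*(Real.tanh ξ))) * hm1 + (((-1:ℝ)*(g v 2)*(κg v)*A*(Real.tanh ξ))) * hm3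
    have hDv : deriv (deriv (deriv γ)) v = (A*(1 - Real.tanh ξ * κg v)) • g v +
        (-(A * Real.tanh ξ * w)) • deriv g v +
        (A * κg v * (1 - Real.tanh ξ * κg v)) • mcross (g v) (deriv g v) := by
      rw [hderiv3]
      funext j
      fin_cases j
      · simp only [Pi.add_apply, Pi.smul_apply, smul_eq_mul, mink, mcross, Matrix.cons_val_zero, Matrix.cons_val_one, Matrix.head_cons, Matrix.cons_val_two, Matrix.tail_cons, Fin.isValue, Fin.zero_eta, Fin.mk_one, Fin.reduceFinMk, Pi.neg_apply, neg_mul]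
        linear_combination (((1:ℝ)*A)) * hR0 + (((-1:ℝ)*(deriv g v 2)*A*(Real.tanh ξ))) * hR1 + (((1:ℝ)*(deriv g v 1)*A*(Real.tanh ξ))) * hR2 + (((-1:ℝ)*(g v 2)*A*(Real.tanh ξ))) * hS1 + (((1:ℝ)*(g v 1)*A*(Real.tanh ξ))) * hS2 + (((1:ℝ)*(deriv g v 0)*A*(Real.tanh ξ)*w)) * hm1 + (((-1:ℝ)*(g v 0)*(κg v)*A*(Real.tanh ξ))) * hm2 + (((1:ℝ)*(deriv g v 0)*(κg v)*A*(Real.tanh ξ) + (-1:ℝ)*(g v 0)*A*(Real.tanh ξ)*w)) * hm3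
      · simp only [Pi.add_apply, Pi.smul_apply, smul_eq_mul, mink, mcross, Matrix.cons_val_zero, Matrix.cons_val_one, Matrix.head_cons, Matrix.cons_val_two, Matrix.tail_cons, Fin.isValue, Fin.zero_eta, Fin.mk_one, Fin.reduceFinMk, Pi.neg_apply, neg_mul]
        linear_combination (((1:ℝ)*(deriv g v 2)*A*(Real.tanh ξ))) * hR0 + (((1:ℝ)*A)) * hR1 + (((-1:ℝ)*(deriv g v 0)*A*(Real.tanh ξ))) * hR2 + (((1:ℝ)*(g v 2)*A*(Real.tanh ξ))) * hS0 + (((-1:ℝ)*(g v 0)*A*(Real.tanh ξ))) * hS2 + (((1:ℝ)*(deriv g v 1)*A*(Real.tanh ξ)*w)) * hm1 + (((-1:ℝ)*(g v 1)*(κg v)*A*(Real.tanh ξ))) * hm2 + (((1:ℝ)*(deriv g v 1)*(κg v)*A*(Real.tanh ξ) + (-1:ℝ)*(g v 1)*A*(Real.tanh ξ)*w)) * hm3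
      · simp only [Pi.add_apply, Pi.smul_apply, smul_eq_mul, mink, mcross, Matrix.cons_val_zero, Matrix.cons_val_one, Matrix.head_cons, Matrix.cons_val_two, Matrix.tail_cons, Fin.isValue, Fin.zero_eta, Fin.mk_one, Fin.reduceFinMk, Pi.neg_apply, neg_mul]
        linear_combination (((1:ℝ)*(deriv g v 1)*A*(Real.tanh ξ))) * hR0 + (((-1:ℝ)*(deriv g v 0)*A*(Real.tanh ξ))) * hR1 + (((1:ℝ)*A)) * hR2 + (((1:ℝ)*(g v 1)*A*(Real.tanh ξ))) * hS0 + (((-1:ℝ)*(g v 0)*A*(Real.tanh ξ))) * hS1 + (((1:ℝ)*(deriv g v 2)*A*(Real.tanh ξ)*w)) * hm1 + (((-1:ℝ)*(g v 2)*(κg v)*A*(Real.tanh ξ))) * hm2 + (((1:ℝ)*(deriv g v 2)*(κg v)*A*(Real.tanh ξ) + (-1:ℝ)*(g v 2)*A*(Real.tanh ξ)*w)) * hm3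
    have hF1 : mink (deriv γ v) (deriv γ v) = -(A^2*(1-(Real.tanh ξ)^2)) := by
      rw [hBv]
      simp only [Pi.add_apply, Pi.smul_apply, smul_eq_mul, mink, mcross, Matrix.cons_val_zero, Matrix.cons_val_one, Matrix.head_cons, Matrix.cons_val_two, Matrix.tail_cons, Fin.isValue, Fin.zero_eta, Fin.mk_one, Fin.reduceFinMk, Pi.neg_apply, neg_mul]
      linear_combination (((-1:ℝ)*(deriv g v 0)*(deriv g v 0)*A*A*(Real.tanh ξ)*(Real.tanh ξ) + (-1:ℝ)*(deriv g v 1)*(deriv g v 1)*A*A*(Real.tanh ξ)*(Real.tanh ξ) + (1:ℝ)*(deriv g v 2)*(deriv g v 2)*A*A*(Real.tanh ξ)*(Real.tanh ξ) + (1:ℝ)*A*A)) * hm1 + (((1:ℝ)*A*A*(Real.tanh ξ)*(Real.tanh ξ))) * hm2 + (((1:ℝ)*(g v 0)*(deriv g v 0)*A*A*(Real.tanh ξ)*(Real.tanh ξ) + (1:ℝ)*(g v 1)*(deriv g v 1)*A*A*(Real.tanh ξ)*(Real.tanh ξ) + (-1:ℝ)*(g v 2)*(deriv g v 2)*A*A*(Real.tanh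 ξ)*(Real.tanh ξ))) * hm3
    have hF2 : mink (mcross (deriv γ v) (deriv (deriv γ) v)) (mcross (deriv γ v) (deriv (deriv γ) v))
        = A^4*(1 - Real.tanh ξ * κg v)^2*(1-(Real.tanh ξ)^2) := by
      rw [hBv, hCv]
      simp only [Pi.add_apply, Pi.smul_apply, smul_eq_mul, mink, mcross, Matrix.cons_val_zero, Matrix.cons_val_one, Matrix.head_cons, Matrix.cons_val_two, Matrix.tail_cons, Fin.isValue, Fin.zero_eta, Fin.mk_one, Fin.reduceFinMk, Pi.neg_apply, neg_mul]
      linear_combination (((1:ℝ)*(deriv g v 0)*(deriv g v 0)*(deriv g v 1)*(deriv g v 1)*(κg v)*(κg v)*A*A*A*A*(Real.tanh ξ)*(Real.tanh ξ)*(Real.tanh ξ)*(Real.tanh ξ) + (1:ℝ)*(deriv g v 1)*(deriv g v 1)*(deriv g v 1)*(deriv g v 1)*(κg v)*(κg v)*A*A*A*A*(Real.tanh ξ)*(Real.tanh ξ)*(Real.tanh ξ)*(Real.tanh ξ) + (-1:ℝ)*(deriv g v 0)*(deriv g v 0)*(deriv g v 2)*(deriv g v 2)*(κg v)*(κg v)*A*A*A*A*(Real.tanh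 ξ)*(Real.tanh ξ)*(Real.tanh ξ)*(Real.tanh ξ) + (-2:ℝ)*(deriv g v 1)*(deriv g v 1)*(deriv g v 2)*(deriv g v 2)*(κg v)*(κg v)*A*A*A*A*(Real.tanh ξ)*(Real.tanh ξ)*(Real.tanh ξ)*(Real.tanh ξ) + (1:ℝ)*(deriv g v 2)*(deriv g v 2)*(deriv g v 2)*(deriv g v 2)*(κg v)*(κg v)*A*A*A*A*(Real.tanh ξ)*(Real.tanh ξ)*(Real.tanh ξ)*(Real.tanh ξ) + (-2:ℝ)*(deriv g v 0)*(deriv g v 0)*(deriv g v 1)*(deriv g v 1)*(κg v)*A*A*A*A*(Real.tanh ξ)*(Real.tanh ξ)*(Real.tanh ξ) + (-2:ℝ)*(deriv g v 1)*(deriv g v 1)*(deriv g v 1)*(deriv g v 1)*(κg v)*A*A*A*A*(Real.tanh ξ)*(Real.tanh ξ)*(Real.tanh ξ) + (2:ℝ)*(deriv g v 0)*(deriv g v 0)*(deriv g v 2)*(deriv g v 2)*(κg v)*A*A*A*A*(Real.tanh ξ)*(Real.tanh ξ)*(Real.tanh ξ) + (4:ℝ)*(deriv g v 1)*(deriv g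 v 1)*(deriv g v 2)*(deriv g v 2)*(κg v)*A*A*A*A*(Real.tanh ξ)*(Real.tanh ξ)*(Real.tanh ξ) + (-2:ℝ)*(deriv g v 2)*(deriv g v 2)*(deriv g v 2)*(deriv g v 2)*(κg v)*A*A*A*A*(Real.tanh ξ)*(Real.tanh ξ)*(Real.tanh ξ) + (1:ℝ)*(deriv g v 0)*(deriv g v 0)*(κg v)*(κg v)*A*A*A*A*(Real.tanh ξ)*(Real.tanh ξ)*(Real.tanh ξ)*(Real.tanh ξ) + (1:ℝ)*(deriv g v 0)*(deriv g v 0)*(deriv g v 1)*(deriv g v 1)*A*A*A*A*(Real.tanh ξ)*(Real.tanh ξ) + (1:ℝ)*(deriv g v 1)*(deriv g v 1)*(deriv g v 1)*(deriv g v 1)*A*A*A*A*(Real.tanh ξ)*(Real.tanh ξ) + (-1:ℝ)*(deriv g v 0)*(deriv g v 0)*(deriv g v 2)*(deriv g v 2)*A*A*A*A*(Real.tanh ξ)*(Real.tanh ξ) + (-2:ℝ)*(deriv g v 1)*(deriv g v 1)*(deriv g v 2)*(deriv g v 2)*A*A*A*A*(Real.tanh ξ)*(Real.tanh ξ) + (1:ℝ)*(deriv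 g v 2)*(deriv g v 2)*(deriv g v 2)*(deriv g v 2)*A*A*A*A*(Real.tanh ξ)*(Real.tanh ξ) + (-1:ℝ)*(deriv g v 0)*(deriv g v 0)*(κg v)*(κg v)*A*A*A*A*(Real.tanh ξ)*(Real.tanh ξ) + (-1:ℝ)*(deriv g v 1)*(deriv g v 1)*(κg v)*(κg v)*A*A*A*A*(Real.tanh ξ)*(Real.tanh ξ) + (1:ℝ)*(deriv g v 2)*(deriv g v 2)*(κg v)*(κg v)*A*A*A*A*(Real.tanh ξ)*(Real.tanh ξ) + (-2:ℝ)*(deriv g v 0)*(deriv g v 0)*(κg v)*A*A*A*A*(Real.tanh ξ)*(Real.tanh ξ)*(Real.tanh ξ) + (2:ℝ)*(deriv g v 0)*(deriv g v 0)*(κg v)*A*A*A*A*(Real.tanh ξ) + (2:ℝ)*(deriv g v 1)*(deriv g v 1)*(κg v)*A*A*A*A*(Real.tanh ξ) + (-2:ℝ)*(deriv g v 2)*(deriv g v 2)*(κg v)*A*A*A*A*(Real.tanh ξ) + (1:ℝ)*(deriv g v 0)*(deriv g v 0)*A*A*A*A*(Real.tanh ξ)*(Real.tanh ξ) + (-1:ℝ)*(deriv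 g v 0)*(deriv g v 0)*A*A*A*A + (-1:ℝ)*(deriv g v 1)*(deriv g v 1)*A*A*A*A + (1:ℝ)*(deriv g v 2)*(deriv g v 2)*A*A*A*A)) * hm1 + (((1:ℝ)*(g v 1)*(g v 1)*(deriv g v 0)*(deriv g v 0)*(κg v)*(κg v)*A*A*A*A*(Real.tanh ξ)*(Real.tanh ξ)*(Real.tanh ξ)*(Real.tanh ξ) + (-1:ℝ)*(g v 2)*(g v 2)*(deriv g v 0)*(deriv g v 0)*(κg v)*(κg v)*A*A*A*A*(Real.tanh ξ)*(Real.tanh ξ)*(Real.tanh ξ)*(Real.tanh ξ) + (-2:ℝ)*(g v 0)*(g v 1)*(deriv g v 0)*(deriv g v 1)*(κg v)*(κg v)*A*A*A*A*(Real.tanh ξ)*(Real.tanh ξ)*(Real.tanh ξ)*(Real.tanh ξ) + (-1:ℝ)*(g v 1)*(g v 1)*(deriv g v 1)*(deriv g v 1)*(κg v)*(κg v)*A*A*A*A*(Real.tanh ξ)*(Real.tanh ξ)*(Real.tanh ξ)*(Real.tanh ξ) + (2:ℝ)*(g v 0)*(g v 2)*(deriv g v 0)*(deriv g v 2)*(κg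 v)*(κg v)*A*A*A*A*(Real.tanh ξ)*(Real.tanh ξ)*(Real.tanh ξ)*(Real.tanh ξ) + (2:ℝ)*(g v 1)*(g v 2)*(deriv g v 1)*(deriv g v 2)*(κg v)*(κg v)*A*A*A*A*(Real.tanh ξ)*(Real.tanh ξ)*(Real.tanh ξ)*(Real.tanh ξ) + (-1:ℝ)*(g v 2)*(g v 2)*(deriv g v 2)*(deriv g v 2)*(κg v)*(κg v)*A*A*A*A*(Real.tanh ξ)*(Real.tanh ξ)*(Real.tanh ξ)*(Real.tanh ξ) + (-2:ℝ)*(g v 1)*(g v 1)*(deriv g v 0)*(deriv g v 0)*(κg v)*A*A*A*A*(Real.tanh ξ)*(Real.tanh ξ)*(Real.tanh ξ) + (2:ℝ)*(g v 2)*(g v 2)*(deriv g v 0)*(deriv g v 0)*(κg v)*A*A*A*A*(Real.tanh ξ)*(Real.tanh ξ)*(Real.tanh ξ) + (4:ℝ)*(g v 0)*(g v 1)*(deriv g v 0)*(deriv g v 1)*(κg v)*A*A*A*A*(Real.tanh ξ)*(Real.tanh ξ)*(Real.tanh ξ) + (2:ℝ)*(g v 1)*(g v 1)*(deriv g v 1)*(deriv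 g v 1)*(κg v)*A*A*A*A*(Real.tanh ξ)*(Real.tanh ξ)*(Real.tanh ξ) + (-4:ℝ)*(g v 0)*(g v 2)*(deriv g v 0)*(deriv g v 2)*(κg v)*A*A*A*A*(Real.tanh ξ)*(Real.tanh ξ)*(Real.tanh ξ) + (-4:ℝ)*(g v 1)*(g v 2)*(deriv g v 1)*(deriv g v 2)*(κg v)*A*A*A*A*(Real.tanh ξ)*(Real.tanh ξ)*(Real.tanh ξ) + (2:ℝ)*(g v 2)*(g v 2)*(deriv g v 2)*(deriv g v 2)*(κg v)*A*A*A*A*(Real.tanh ξ)*(Real.tanh ξ)*(Real.tanh ξ) + (-1:ℝ)*(deriv g v 1)*(deriv g v 1)*(κg v)*(κg v)*A*A*A*A*(Real.tanh ξ)*(Real.tanh ξ)*(Real.tanh ξ)*(Real.tanh ξ) + (1:ℝ)*(deriv g v 2)*(deriv g v 2)*(κg v)*(κg v)*A*A*A*A*(Real.tanh ξ)*(Real.tanh ξ)*(Real.tanh ξ)*(Real.tanh ξ) + (1:ℝ)*(g v 1)*(g v 1)*(deriv g v 0)*(deriv g v 0)*A*A*A*A*(Real.tanh ξ)*(Real.tanh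 ξ) + (-1:ℝ)*(g v 2)*(g v 2)*(deriv g v 0)*(deriv g v 0)*A*A*A*A*(Real.tanh ξ)*(Real.tanh ξ) + (-2:ℝ)*(g v 0)*(g v 1)*(deriv g v 0)*(deriv g v 1)*A*A*A*A*(Real.tanh ξ)*(Real.tanh ξ) + (-1:ℝ)*(g v 1)*(g v 1)*(deriv g v 1)*(deriv g v 1)*A*A*A*A*(Real.tanh ξ)*(Real.tanh ξ) + (2:ℝ)*(g v 0)*(g v 2)*(deriv g v 0)*(deriv g v 2)*A*A*A*A*(Real.tanh ξ)*(Real.tanh ξ) + (2:ℝ)*(g v 1)*(g v 2)*(deriv g v 1)*(deriv g v 2)*A*A*A*A*(Real.tanh ξ)*(Real.tanh ξ) + (-1:ℝ)*(g v 2)*(g v 2)*(deriv g v 2)*(deriv g v 2)*A*A*A*A*(Real.tanh ξ)*(Real.tanh ξ) + (2:ℝ)*(deriv g v 1)*(deriv g v 1)*(κg v)*A*A*A*A*(Real.tanh ξ)*(Real.tanh ξ)*(Real.tanh ξ) + (-2:ℝ)*(deriv g v 2)*(deriv g v 2)*(κg v)*A*A*A*A*(Real.tanh ξ)*(Real.tanh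 ξ)*(Real.tanh ξ) + (-1:ℝ)*(κg v)*(κg v)*A*A*A*A*(Real.tanh ξ)*(Real.tanh ξ)*(Real.tanh ξ)*(Real.tanh ξ) + (-1:ℝ)*(deriv g v 1)*(deriv g v 1)*A*A*A*A*(Real.tanh ξ)*(Real.tanh ξ) + (1:ℝ)*(deriv g v 2)*(deriv g v 2)*A*A*A*A*(Real.tanh ξ)*(Real.tanh ξ) + (1:ℝ)*(κg v)*(κg v)*A*A*A*A*(Real.tanh ξ)*(Real.tanh ξ) + (2:ℝ)*(κg v)*A*A*A*A*(Real.tanh ξ)*(Real.tanh ξ)*(Real.tanh ξ) + (-2:ℝ)*(κg v)*A*A*A*A*(Real.tanh ξ) + (-1:ℝ)*A*A*A*A*(Real.tanh ξ)*(Real.tanh ξ) + (1:ℝ)*A*A*A*A)) * hm2 + (((-1:ℝ)*(g v 0)*(deriv g v 0)*(κg v)*(κg v)*A*A*A*A*(Real.tanh ξ)*(Real.tanh ξ)*(Real.tanh ξ)*(Real.tanh ξ) + (-1:ℝ)*(g v 1)*(deriv g v 1)*(κg v)*(κg v)*A*A*A*A*(Real.tanh ξ)*(Real.tanh ξ)*(Real.tanh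 ξ)*(Real.tanh ξ) + (1:ℝ)*(g v 2)*(deriv g v 2)*(κg v)*(κg v)*A*A*A*A*(Real.tanh ξ)*(Real.tanh ξ)*(Real.tanh ξ)*(Real.tanh ξ) + (1:ℝ)*(g v 0)*(deriv g v 0)*(κg v)*(κg v)*A*A*A*A*(Real.tanh ξ)*(Real.tanh ξ) + (1:ℝ)*(g v 1)*(deriv g v 1)*(κg v)*(κg v)*A*A*A*A*(Real.tanh ξ)*(Real.tanh ξ) + (-1:ℝ)*(g v 2)*(deriv g v 2)*(κg v)*(κg v)*A*A*A*A*(Real.tanh ξ)*(Real.tanh ξ) + (2:ℝ)*(g v 0)*(deriv g v 0)*(κg v)*A*A*A*A*(Real.tanh ξ)*(Real.tanh ξ)*(Real.tanh ξ) + (2:ℝ)*(g v 1)*(deriv g v 1)*(κg v)*A*A*A*A*(Real.tanh ξ)*(Real.tanh ξ)*(Real.tanh ξ) + (-2:ℝ)*(g v 2)*(deriv g v 2)*(κg v)*A*A*A*A*(Real.tanh ξ)*(Real.tanh ξ)*(Real.tanh ξ) + (-2:ℝ)*(g v 0)*(deriv g v 0)*(κg v)*A*A*A*A*(Real.tanh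 ξ) + (-2:ℝ)*(g v 1)*(deriv g v 1)*(κg v)*A*A*A*A*(Real.tanh ξ) + (2:ℝ)*(g v 2)*(deriv g v 2)*(κg v)*A*A*A*A*(Real.tanh ξ) + (-1:ℝ)*(g v 0)*(deriv g v 0)*A*A*A*A*(Real.tanh ξ)*(Real.tanh ξ) + (-1:ℝ)*(g v 1)*(deriv g v 1)*A*A*A*A*(Real.tanh ξ)*(Real.tanh ξ) + (1:ℝ)*(g v 2)*(deriv g v 2)*A*A*A*A*(Real.tanh ξ)*(Real.tanh ξ) + (1:ℝ)*(g v 0)*(deriv g v 0)*A*A*A*A + (1:ℝ)*(g v 1)*(deriv g v 1)*A*A*A*A + (-1:ℝ)*(g v 2)*(deriv g v 2)*A*A*A*A)) * hm3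
    have hF3 : mdet (deriv γ v) (deriv (deriv γ) v) (deriv (deriv (deriv γ)) v)
        = A^3*(1 - Real.tanh ξ * κg v)^2*(κg v - Real.tanh ξ) := by
      rw [hBv, hCv, hDv]
      simp only [mdet, Matrix.det_fin_three, Matrix.of_apply, Matrix.cons_val', Matrix.cons_val_zero, Matrix.cons_val_one, Matrix.head_cons, Matrix.cons_val_two, Matrix.tail_cons, Matrix.empty_val', Matrix.cons_val_fin_one, Matrix.head_fin_const, Fin.isValue, Fin.zero_eta, Fin.mk_one, Fin.reduceFinMk, Pi.add_apply, Pi.smul_apply, smul_eq_mul, mcross, Pi.neg_apply, neg_mul]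
      linear_combination (((-1:ℝ)*(deriv g v 0)*(deriv g v 0)*(κg v)*(κg v)*(κg v)*A*A*A*(Real.tanh ξ)*(Real.tanh ξ) + (-1:ℝ)*(deriv g v 1)*(deriv g v 1)*(κg v)*(κg v)*(κg v)*A*A*A*(Real.tanh ξ)*(Real.tanh ξ) + (1:ℝ)*(deriv g v 2)*(deriv g v 2)*(κg v)*(κg v)*(κg v)*A*A*A*(Real.tanh ξ)*(Real.tanh ξ) + (1:ℝ)*(deriv g v 0)*(deriv g v 0)*(κg v)*(κg v)*A*A*A*(Real.tanh ξ)*(Real.tanh ξ)*(Real.tanh ξ) + (1:ℝ)*(deriv g v 1)*(deriv g v 1)*(κg v)*(κg v)*A*A*A*(Real.tanh ξ)*(Real.tanh ξ)*(Real.tanh ξ) + (-1:ℝ)*(deriv g v 2)*(deriv g v 2)*(κg v)*(κg v)*A*A*A*(Real.tanh ξ)*(Real.tanh ξ)*(Real.tanh ξ) + (2:ℝ)*(deriv g v 0)*(deriv g v 0)*(κg v)*(κg v)*A*A*A*(Real.tanh ξ) + (2:ℝ)*(deriv g v 1)*(deriv g v 1)*(κg v)*(κg v)*A*A*A*(Real.tanh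 ξ) + (-2:ℝ)*(deriv g v 2)*(deriv g v 2)*(κg v)*(κg v)*A*A*A*(Real.tanh ξ) + (-2:ℝ)*(deriv g v 0)*(deriv g v 0)*(κg v)*A*A*A*(Real.tanh ξ)*(Real.tanh ξ) + (-2:ℝ)*(deriv g v 1)*(deriv g v 1)*(κg v)*A*A*A*(Real.tanh ξ)*(Real.tanh ξ) + (2:ℝ)*(deriv g v 2)*(deriv g v 2)*(κg v)*A*A*A*(Real.tanh ξ)*(Real.tanh ξ) + (-1:ℝ)*(deriv g v 0)*(deriv g v 0)*(κg v)*A*A*A + (-1:ℝ)*(deriv g v 1)*(deriv g v 1)*(κg v)*A*A*A + (1:ℝ)*(deriv g v 2)*(deriv g v 2)*(κg v)*A*A*A + (1:ℝ)*(deriv g v 0)*(deriv g v 0)*A*A*A*(Real.tanh ξ) + (1:ℝ)*(deriv g v 1)*(deriv g v 1)*A*A*A*(Real.tanh ξ) + (-1:ℝ)*(deriv g v 2)*(deriv g v 2)*A*A*A*(Real.tanh ξ))) * hm1 + (((1:ℝ)*(κg v)*(κg v)*(κg v)*A*A*A*(Real.tanh ξ)*(Real.tanh ξ) + (-1:ℝ)*(κg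 v)*(κg v)*A*A*A*(Real.tanh ξ)*(Real.tanh ξ)*(Real.tanh ξ) + (-2:ℝ)*(κg v)*(κg v)*A*A*A*(Real.tanh ξ) + (2:ℝ)*(κg v)*A*A*A*(Real.tanh ξ)*(Real.tanh ξ) + (1:ℝ)*(κg v)*A*A*A + (-1:ℝ)*A*A*A*(Real.tanh ξ))) * hm2 + (((1:ℝ)*(g v 0)*(deriv g v 0)*(κg v)*(κg v)*(κg v)*A*A*A*(Real.tanh ξ)*(Real.tanh ξ) + (1:ℝ)*(g v 1)*(deriv g v 1)*(κg v)*(κg v)*(κg v)*A*A*A*(Real.tanh ξ)*(Real.tanh ξ) + (-1:ℝ)*(g v 2)*(deriv g v 2)*(κg v)*(κg v)*(κg v)*A*A*A*(Real.tanh ξ)*(Real.tanh ξ) + (-1:ℝ)*(g v 0)*(deriv g v 0)*(κg v)*(κg v)*A*A*A*(Real.tanh ξ)*(Real.tanh ξ)*(Real.tanh ξ) + (-1:ℝ)*(g v 1)*(deriv g v 1)*(κg v)*(κg v)*A*A*A*(Real.tanh ξ)*(Real.tanh ξ)*(Real.tanh ξ) + (1:ℝ)*(g v 2)*(deriv g v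 2)*(κg v)*(κg v)*A*A*A*(Real.tanh ξ)*(Real.tanh ξ)*(Real.tanh ξ) + (-2:ℝ)*(g v 0)*(deriv g v 0)*(κg v)*(κg v)*A*A*A*(Real.tanh ξ) + (-2:ℝ)*(g v 1)*(deriv g v 1)*(κg v)*(κg v)*A*A*A*(Real.tanh ξ) + (2:ℝ)*(g v 2)*(deriv g v 2)*(κg v)*(κg v)*A*A*A*(Real.tanh ξ) + (2:ℝ)*(g v 0)*(deriv g v 0)*(κg v)*A*A*A*(Real.tanh ξ)*(Real.tanh ξ) + (2:ℝ)*(g v 1)*(deriv g v 1)*(κg v)*A*A*A*(Real.tanh ξ)*(Real.tanh ξ) + (-2:ℝ)*(g v 2)*(deriv g v 2)*(κg v)*A*A*A*(Real.tanh ξ)*(Real.tanh ξ) + (1:ℝ)*(g v 0)*(deriv g v 0)*(κg v)*A*A*A + (1:ℝ)*(g v 1)*(deriv g v 1)*(κg v)*A*A*A + (-1:ℝ)*(g v 2)*(deriv g v 2)*(κg v)*A*A*A + (-1:ℝ)*(g v 0)*(deriv g v 0)*A*A*A*(Real.tanh ξ) + (-1:ℝ)*(g v 1)*(deriv g v 1)*A*A*A*(Real.tanh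 ξ) + (1:ℝ)*(g v 2)*(deriv g v 2)*A*A*A*(Real.tanh ξ))) * hm3
    have h1T2 : (0:ℝ) < 1-(Real.tanh ξ)^2 := by nlinarith
    have hsqpos : (0:ℝ) < Real.sqrt (1-(Real.tanh ξ)^2) := Real.sqrt_pos.2 h1T2
    have hA2Tk : (0:ℝ) < A^2*(1 - Real.tanh ξ * κg v) := mul_pos (by positivity) h1Tk
    have hmnorm : mnorm (mcross (deriv γ v) (deriv (deriv γ) v))
        = A^2*(1 - Real.tanh ξ * κg v)*Real.sqrt (1-(Real.tanh ξ)^2) := by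
      simp only [mnorm]
      rw [hF2,
        show A^4*(1 - Real.tanh ξ * κg v)^2*(1-(Real.tanh ξ)^2)
          = (A^2*(1 - Real.tanh ξ * κg v))^2*(1-(Real.tanh ξ)^2) by ring,
        abs_of_nonneg (le_of_lt (mul_pos (pow_pos hA2Tk 2) h1T2)),
        Real.sqrt_mul (sq_nonneg _), Real.sqrt_sq hA2Tk.le]
    have hbase : -(mink (deriv γ v) (deriv γ v)) = A^2*(1-(Real.tanh ξ)^2) := by rw [hF1]; ring
    constructor
    · rw [hκdef v, hmnorm, hbase]
      have hm0 : (0:ℝ) < A^2*(1-(Real.tanh ξ)^2) := mul_pos (by positivity) h1T2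
      have h32 : (A^2*(1-(Real.tanh ξ)^2)) ^ ((3:ℝ)/2)
          = A^3*(1-(Real.tanh ξ)^2)*Real.sqrt (1-(Real.tanh ξ)^2) := by
        rw [show (3:ℝ)/2 = 1 + 1/2 by norm_num, Real.rpow_add hm0, Real.rpow_one,
          ← Real.sqrt_eq_rpow, Real.sqrt_mul (sq_nonneg A), Real.sqrt_sq hA.le]
        ring
      have hd1 : (0:ℝ) < A^3*(1-(Real.tanh ξ)^2)*Real.sqrt (1-(Real.tanh ξ)^2) :=
        mul_pos (mul_pos (by positivity) h1T2) hsqpos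
      rw [show (3/2 : ℝ) = (3:ℝ)/2 by norm_num, h32, div_eq_div_iff hd1.ne' hden.ne']
      ring
    · rw [hτdef v, hF3, hmnorm,
        show (A^2*(1 - Real.tanh ξ * κg v)*Real.sqrt (1-(Real.tanh ξ)^2))^2
          = (A^2*(1 - Real.tanh ξ * κg v))^2 * (Real.sqrt (1-(Real.tanh ξ)^2))^2 by ring,
        Real.sq_sqrt h1T2.le, div_eq_div_iff (mul_pos (pow_pos hA2Tk 2) h1T2).ne' hden.ne']
      ring
  constructor
  · intro hzero
    have hκgdiff : Differentiable ℝ κg := by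
      have hexp : κg = fun v => (g v 0 * (deriv g v 1 * deriv (deriv g) v 2 - deriv g v 2 * deriv (deriv g) v 1)
          - g v 1 * (deriv g v 0 * deriv (deriv g) v 2 - deriv g v 2 * deriv (deriv g) v 0)
          + g v 2 * (deriv g v 0 * deriv (deriv g) v 1 - deriv g v 1 * deriv (deriv g) v 0)) := by
        funext v
        rw [hκg v]
        simp [mdet, Matrix.det_fin_three]
        ring
      rw [hexp]
      fun_prop
    have hconst : ∀ v ∈ I, κg v = κg 0 := by
      intro v hv
      have hconv : Convex ℝ I := by rw [hI]; exact convex_Ioo a b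
      refine hconv.is_const_of_fderivWithin_eq_zero hκgdiff.differentiableOn (fun z hz => ?_) hv h0
      rw [fderivWithin_of_isOpen hIopen hz]
      refine ContinuousLinearMap.ext fun u => ?_
      have h2 : deriv κg z = 0 := hzero z hz
      have h4 := (fderiv ℝ κg z).map_smul u (1:ℝ)
      simp only [smul_eq_mul, mul_one] at h4
      have h3 : fderiv ℝ κg z 1 = deriv κg z := rfl
      simp [h4, h3, h2]
    refine ⟨(1 - Real.tanh ξ * κg 0)/(A*(1-(Real.tanh ξ)^2)),
      (κg 0 - Real.tanh ξ)/(A*(1-(Real.tanh ξ)^2)), ?_, ?_, ?_⟩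
    · have := hξκ 0 h0
      exact div_ne_zero (by linarith) (ne_of_gt hden)
    · exact div_ne_zero (sub_ne_zero.mpr (hne 0 h0)) (ne_of_gt hden)
    · intro v hv
      obtain ⟨e1, e2⟩ := hκτ v hv
      rw [e1, e2, hconst v hv]
      exact ⟨rfl, rfl⟩
  · rintro ⟨c₁, c₂, hc1, hc2, hc⟩ v hv
    have hval : ∀ u ∈ I, κg u = c₂*(A*(1-(Real.tanh ξ)^2)) + Real.tanh ξ := by
      intro u hu
      have h1 := (hκτ u hu).2
      have h2 := (hc u hu).2
      rw [h2] at h1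
      rw [eq_comm, div_eq_iff (ne_of_gt hden)] at h1
      linarith
    have hev : κg =ᶠ[nhds v] fun _ => c₂*(A*(1-(Real.tanh ξ)^2)) + Real.tanh ξ :=
      Filter.eventually_of_mem (hIopen.mem_nhds hv) hval
    rw [hev.deriv_eq, deriv_const]
end
end
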